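/- arXiv:2409.02677 — 6 statements merged into one kernel-verified Lean document; each statement's English description precedes it below -/
import Mathlib

section
/- If M and N are N-differentiable AV-modules over (A, V), then the AV-module M ⊗_A N (with V acting by the Leibniz rule η(m⊗n) = (ηm)⊗n + m⊗(ηn)) is 2N-differentiable; in particular the class of differentiable AV-modules is closed under tensor product over A. -/
/-!
`M` is `N`-differentiable when the alternating binomial sum `differentialSum ρ N f η m` vanishes
identically. On a pure tensor the Leibniz rule and Vandermonde's identity
`(1 - x) ^ (p + q) = (1 - x) ^ p * (1 - x) ^ q` write the `(p + q)`-th sum of `M ⊗_A N` as a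
combination of `p`-th sums of `M` and `q`-th sums of `N`, so orders add under tensor product.
-/

open TensorProduct Finset

theorem sum_range_choose_add_smul {G : Type*} [AddCommGroup G] (p q : ℕ) (g : ℕ → G) :
    ∑ k ∈ range (p + q + 1), ((p + q).choose k : ℤ) • g k =
      ∑ i ∈ range (p + 1), ∑ j ∈ range (q + 1), ((p.choose i : ℤ) * q.choose j) • g (i + j) := by
  have hvanish : ∀ x : ℕ × ℕ, (x.1 ≤ p → q < x.2) →
      ((p.choose x.1 : ℤ) * q.choose x.2) • g (x.1 + x.2) = 0 := by
    intro x hx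
    rcases Nat.lt_or_ge p x.1 with h | h
    · simp [Nat.choose_eq_zero_of_lt h]
    · simp [Nat.choose_eq_zero_of_lt (hx h)]
  -- Split the box into fibres of `(i, j) ↦ i + j`; each fibre is an antidiagonal cut to the box.
  rw [← sum_product', ← sum_fiberwise_of_maps_to (g := fun x : ℕ × ℕ => x.1 + x.2)
    (t := range (p + q + 1)) (by intro x hx; simp only [mem_product, mem_range] at hx ⊢; omega)]
  refine sum_congr rfl fun k _ => ?_
  rw [Nat.add_choose_eq, Nat.cast_sum, sum_smul]
  refine (sum_congr rfl fun x hx => ?_).trans (sum_subset (fun x hx => ?_) fun x hx hx' => ?_).symm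
  · rw [HasAntidiagonal.mem_antidiagonal.mp hx, Nat.cast_mul]
  · exact HasAntidiagonal.mem_antidiagonal.mpr (mem_filter.mp hx).2
  · simp only [mem_filter, mem_product, mem_range, HasAntidiagonal.mem_antidiagonal, not_and]
      at hx hx'
    exact hvanish x fun h => by by_contra h'; exact hx' (by omega) (by omega)

theorem sum_range_alternating_choose_add_smul {G : Type*} [AddCommGroup G] (p q : ℕ)
    (g : ℕ → G) :
    ∑ k ∈ range (p + q + 1), ((-1 : ℤ) ^ k * (p + q).choose k) • g k =
      ∑ i ∈ range (p + 1), ∑ j ∈ range (q + 1),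
        ((-1 : ℤ) ^ i * p.choose i) • ((-1 : ℤ) ^ j * q.choose j) • g (i + j) := by
  simp_rw [mul_comm ((-1 : ℤ) ^ _), mul_smul, sum_range_choose_add_smul, smul_smul]
  refine sum_congr rfl fun i _ => sum_congr rfl fun j _ => ?_
  rw [pow_add]
  congr 1
  ring

section DifferentialSum

variable {A V M : Type*} [CommRing A] [MulAction A V] [AddCommGroup M] [Module A M]

def differentialSum (ρ : V → M → M) (N : ℕ) (f : A) (η : V) (m : M) : M :=
  ∑ k ∈ range (N + 1), ((-1 : ℤ) ^ k * N.choose k) • (f ^ k • ρ (f ^ (N - k) • η) m)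

theorem differentialSum_add {ρ : V → M → M} (hρ : ∀ η m m', ρ η (m + m') = ρ η m + ρ η m')
    (N : ℕ) (f : A) (η : V) (m m' : M) :
    differentialSum ρ N f η (m + m') = differentialSum ρ N f η m + differentialSum ρ N f η m' := by
  simp only [differentialSum, hρ, smul_add, sum_add_distrib]

theorem differentialSum_zero {ρ : V → M → M} (hρ : ∀ η m m', ρ η (m + m') = ρ η m + ρ η m')
    (N : ℕ) (f : A) (η : V) : differentialSum ρ N f η 0 = 0 := by
  simpa using differentialSum_add hρ N f η 0 0

end DifferentialSum

section Tensor

variable {A V M N : Type*} [CommRing A] [MulAction A V] [AddCommGroup M] [Module A M]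
  [AddCommGroup N] [Module A N] {ρM : V → M → M} {ρN : V → N → N} {τ : V → M ⊗[A] N → M ⊗[A] N}

theorem smul_pow_add_apply_tmul
    (hτ : ∀ η m n, τ η (m ⊗ₜ n) = ρM η m ⊗ₜ n + m ⊗ₜ ρN η n) (f : A) (η : V) (m : M) (n : N)
    (i j a b : ℕ) (c d : ℤ) :
    c • d • f ^ (i + j) • τ (f ^ (a + b) • η) (m ⊗ₜ n) =
      d • (f ^ j • c • f ^ i • ρM (f ^ a • f ^ b • η) m) ⊗ₜ n +
        c • m ⊗ₜ (f ^ i • d • f ^ j • ρN (f ^ b • f ^ a • η) n) := by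
  rw [pow_add f a, mul_smul, smul_comm (f ^ b) (f ^ a) η, hτ]
  simp only [smul_add, ← smul_tmul', tmul_smul, ← Int.cast_smul_eq_zsmul A, smul_smul]
  congr 2 <;> ring

theorem differentialSum_tmul
    (hτ : ∀ η m n, τ η (m ⊗ₜ n) = ρM η m ⊗ₜ n + m ⊗ₜ ρN η n) (p q : ℕ) (f : A) (η : V)
    (m : M) (n : N) :
    differentialSum τ (p + q) f η (m ⊗ₜ n) =
      ∑ j ∈ range (q + 1), ((-1 : ℤ) ^ j * q.choose j) •
          (f ^ j • differentialSum ρM p f (f ^ (q - j) • η) m) ⊗ₜ n +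
        ∑ i ∈ range (p + 1), ((-1 : ℤ) ^ i * p.choose i) •
          m ⊗ₜ (f ^ i • differentialSum ρN q f (f ^ (p - i) • η) n) := by
  simp only [differentialSum, sum_range_alternating_choose_add_smul, smul_sum, sum_tmul, tmul_sum]
  rw [sum_comm (s := range (q + 1)), ← sum_add_distrib]
  refine sum_congr rfl fun i hi => ?_
  rw [← sum_add_distrib]
  refine sum_congr rfl fun j hj => ?_
  rw [mem_range] at hi hj
  rw [show p + q - (i + j) = (p - i) + (q - j) by omega, smul_pow_add_apply_tmul hτ]

theorem differentialSum_tensor_eq_zero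
    (hτadd : ∀ η t t', τ η (t + t') = τ η t + τ η t')
    (hτ : ∀ η m n, τ η (m ⊗ₜ n) = ρM η m ⊗ₜ n + m ⊗ₜ ρN η n) {p q : ℕ}
    (hM : ∀ (f : A) η m, differentialSum ρM p f η m = 0)
    (hN : ∀ (f : A) η n, differentialSum ρN q f η n = 0)
    (f : A) (η : V) (t : M ⊗[A] N) : differentialSum τ (p + q) f η t = 0 := by
  induction t using TensorProduct.induction_on with
  | zero => exact differentialSum_zero hτadd _ f η
  | tmul m n => simp [differentialSum_tmul hτ, hM, hN]
  | add x y hx hy => rw [differentialSum_add hτadd, hx, hy, add_zero]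

end Tensor

theorem tensor_of_differentiable_is_differentiable_general
    (K : Type*) [Field K] (A : Type*) [CommRing A] [Algebra K A]
    (M N : Type*) [AddCommGroup M] [Module A M] [AddCommGroup N] [Module A N]
    (ρM : Derivation K A A → M → M) (ρN : Derivation K A A → N → N)
    -- the diagonal (Leibniz-rule) action of `V` on `M ⊗_A N`:
    (τ : Derivation K A A → TensorProduct A M N → TensorProduct A M N)
    (hτadd : ∀ η t t', τ η (t + t') = τ η t + τ η t')
    (hτ : ∀ (η : Derivation K A A) (m : M) (n : N),
      τ η (m ⊗ₜ[A] n) = (ρM η m) ⊗ₜ[A] n + m ⊗ₜ[A] (ρN η n))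
    (N₀ : ℕ)
    -- `M` and `N` are `N₀`-differentiable:
    (hM : ∀ (f : A) (η : Derivation K A A) (m : M),
      ∑ k ∈ Finset.range (N₀ + 1),
        ((-1 : ℤ) ^ k * (N₀.choose k : ℤ)) • (f ^ k • ρM ((f ^ (N₀ - k)) • η) m) = 0)
    (hN : ∀ (f : A) (η : Derivation K A A) (n : N),
      ∑ k ∈ Finset.range (N₀ + 1),
        ((-1 : ℤ) ^ k * (N₀.choose k : ℤ)) • (f ^ k • ρN ((f ^ (N₀ - k)) • η) n) = 0) :
    -- then `M ⊗_A N` is `2N₀`-differentiable: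
    ∀ (f : A) (η : Derivation K A A) (t : TensorProduct A M N),
      ∑ k ∈ Finset.range (2 * N₀ + 1),
        ((-1 : ℤ) ^ k * ((2 * N₀).choose k : ℤ)) •
          (f ^ k • τ ((f ^ (2 * N₀ - k)) • η) t) = 0 := by
  intro f η t
  rw [two_mul]
  exact differentialSum_tensor_eq_zero hτadd hτ hM hN f η t

/-- If `M` and `N` are `N₀`-differentiable AV-modules over `(A, V)`, then the
AV-module `M ⊗_A N`, with `V` acting by the Leibniz rule
`η(m⊗n) = (ηm)⊗n + m⊗(ηn)`, is `2N₀`-differentiable. -/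
theorem tensor_of_differentiable_is_differentiable
    (K : Type*) [Field K] [CharZero K] (A : Type*) [CommRing A] [Algebra K A]
    (M N : Type*) [AddCommGroup M] [Module A M] [AddCommGroup N] [Module A N]
    (ρM : Derivation K A A → M → M) (ρN : Derivation K A A → N → N)
    -- `M` and `N` are AV-modules:
    (hMadd : ∀ η m m', ρM η (m + m') = ρM η m + ρM η m')
    (hNadd : ∀ η n n', ρN η (n + n') = ρN η n + ρN η n')
    (hMleib : ∀ (η : Derivation K A A) (f : A) (m : M),
      ρM η (f • m) = η f • m + f • ρM η m)
    (hNleib : ∀ (η : Derivation K A A) (f : A) (n : N),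
      ρN η (f • n) = η f • n + f • ρN η n)
    -- the diagonal (Leibniz-rule) action of `V` on `M ⊗_A N`:
    (τ : Derivation K A A → TensorProduct A M N → TensorProduct A M N)
    (hτadd : ∀ η t t', τ η (t + t') = τ η t + τ η t')
    (hτ : ∀ (η : Derivation K A A) (m : M) (n : N),
      τ η (m ⊗ₜ[A] n) = (ρM η m) ⊗ₜ[A] n + m ⊗ₜ[A] (ρN η n))
    (N₀ : ℕ)
    -- `M` and `N` are `N₀`-differentiable:
    (hM : ∀ (f : A) (η : Derivation K A A) (m : M),
      ∑ k ∈ Finset.range (N₀ + 1),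
        ((-1 : ℤ) ^ k * (N₀.choose k : ℤ)) • (f ^ k • ρM ((f ^ (N₀ - k)) • η) m) = 0)
    (hN : ∀ (f : A) (η : Derivation K A A) (n : N),
      ∑ k ∈ Finset.range (N₀ + 1),
        ((-1 : ℤ) ^ k * (N₀.choose k : ℤ)) • (f ^ k • ρN ((f ^ (N₀ - k)) • η) n) = 0) :
    -- then `M ⊗_A N` is `2N₀`-differentiable:
    ∀ (f : A) (η : Derivation K A A) (t : TensorProduct A M N),
      ∑ k ∈ Finset.range (2 * N₀ + 1),
        ((-1 : ℤ) ^ k * ((2 * N₀).choose k : ℤ)) •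
          (f ^ k • τ ((f ^ (2 * N₀ - k)) • η) t) = 0 :=
  tensor_of_differentiable_is_differentiable_general K A M N ρM ρN τ hτadd hτ N₀ hM hN
end

section
/- For N > 1, in the Lie algebra of derivations of K[[X]] (one variable, so n = 1), the bracket of the subspace (S_N ⊕ S_{N+1})·d/dX with m·d/dX equals m^N·d/dX, where S_k is the span of X^k. -/
/-!
Writing `W(f, g) = f g' - g f'`, the bracket of `X ^ N` with `X v` is
`X ^ N (X v' - (N - 1) v)`, and the Euler operator `X d/dX - (N - 1)` maps `K⟦X⟧` onto the
series with vanishing `X ^ (N - 1)`-coefficient. So these brackets give all of `X ^ N K⟦X⟧`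
except the monomial `X ^ (2N - 1)`, which is `-W(X ^ (N + 1), X ^ (N - 1)) / 2`; this is where
`N > 1` enters, as `X ^ (N - 1)` must lie in `m`. The reverse inclusion is divisibility.
-/

open PowerSeries

namespace PowerSeries

section CommRing

variable {R : Type*} [CommRing R]

theorem derivative_X_pow (n : ℕ) :
    derivative R ((X : R⟦X⟧) ^ n) = (n : R⟦X⟧) * X ^ (n - 1) := by
  rw [Derivation.leibniz_pow, derivative_X, smul_eq_mul, mul_one, nsmul_eq_mul]

theorem coeff_X_mul_derivative (f : R⟦X⟧) (n : ℕ) :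
    coeff n (X * derivative R f) = n * coeff n f := by
  rcases n with _ | n
  · simp
  · rw [coeff_succ_X_mul, coeff_derivative, mul_comm, Nat.cast_succ]

theorem X_pow_dvd_derivative {n : ℕ} {f : R⟦X⟧} (hf : X ^ (n + 1) ∣ f) :
    X ^ n ∣ derivative R f := by
  obtain ⟨w, rfl⟩ := hf
  rw [Derivation.leibniz, derivative_X_pow, smul_eq_mul, smul_eq_mul, pow_succ]
  exact dvd_add (dvd_mul_of_dvd_left (dvd_mul_right _ _) _)
    (dvd_mul_of_dvd_right (dvd_mul_left _ _) _)

theorem X_pow_dvd_mul_derivative_sub {n : ℕ} {f g : R⟦X⟧} (hf : X ^ (n + 1) ∣ f)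
    (hg : X ∣ g) : X ^ (n + 1) ∣ f * derivative R g - g * derivative R f := by
  refine dvd_sub (dvd_mul_of_dvd_left hf _) ?_
  rw [pow_succ']
  exact mul_dvd_mul hg (X_pow_dvd_derivative hf)

theorem X_pow_mul_derivative_X_mul_sub (n : ℕ) (v : R⟦X⟧) :
    X ^ (n + 1) * derivative R (X * v) - X * v * derivative R (X ^ (n + 1))
      = X ^ (n + 1) * (X * derivative R v - (n : R⟦X⟧) * v) := by
  rw [Derivation.leibniz, derivative_X, derivative_X_pow, smul_eq_mul, smul_eq_mul,
    Nat.add_sub_cancel]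
  push_cast
  ring

theorem X_pow_add_two_mul_derivative_X_pow_sub (n : ℕ) :
    (X : R⟦X⟧) ^ (n + 2) * derivative R (X ^ n) - X ^ n * derivative R (X ^ (n + 2))
      = -2 * X ^ (2 * n + 1) := by
  rcases n with _ | n
  · simp
  · rw [derivative_X_pow, derivative_X_pow]
    simp only [Nat.add_sub_cancel]
    push_cast
    ring

end CommRing

section Field

variable {K : Type*} [Field K] [CharZero K]

theorem exists_X_mul_derivative_sub_eq (n : ℕ) (u : K⟦X⟧) :
    ∃ v : K⟦X⟧, X * derivative K v - (n : K⟦X⟧) * v = u - C (coeff n u) * X ^ n := by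
  refine ⟨mk fun k => if k = n then 0 else coeff k u / ((k : K) - n), ?_⟩
  ext k
  rw [map_sub, map_sub, coeff_X_mul_derivative, ← map_natCast (C (R := K)), coeff_C_mul,
    coeff_C_mul, coeff_X_pow, coeff_mk]
  by_cases hk : k = n
  · subst hk
    simp
  · have : (k : K) - n ≠ 0 := sub_ne_zero.mpr (Nat.cast_injective.ne hk)
    simp only [hk, if_false, mul_zero, sub_zero]
    field_simp

theorem exists_X_pow_succ_mul_eq (n : ℕ) (u : K⟦X⟧) :
    ∃ v : K⟦X⟧, X ^ (n + 1) * u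
      = (X ^ (n + 1) * derivative K (X * v) - X * v * derivative K (X ^ (n + 1)))
        + (-(coeff n u / 2)) •
          (X ^ (n + 2) * derivative K (X ^ n) - X ^ n * derivative K (X ^ (n + 2))) := by
  obtain ⟨v, hv⟩ := exists_X_mul_derivative_sub_eq n u
  refine ⟨v, ?_⟩
  rw [X_pow_mul_derivative_X_mul_sub, hv, X_pow_add_two_mul_derivative_X_pow_sub,
    smul_eq_C_mul, ← mul_assoc, ← map_ofNat C 2, ← map_neg, ← map_mul,
    show -(coeff n u / 2) * -2 = coeff n u by ring]
  ring

end Field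

end PowerSeries

/-- For `N > 1`, in `Der K[[X]]` (identifying `f·d/dX` with its coefficient `f`),
the span of brackets of `(S_N ⊕ S_{N+1})·d/dX` with `m·d/dX` equals `m^N·d/dX`,
i.e. `Span_K {fg' − gf' : f ∈ KX^N + KX^(N+1), g ∈ m} = X^N K[[X]]`. -/
theorem bracket_span_eq_mN
    (K : Type*) [Field K] [CharZero K] (N : ℕ) (hN : 1 < N) :
    Submodule.span K {h : PowerSeries K |
        ∃ f ∈ Submodule.span K ({X ^ N, X ^ (N + 1)} : Set (PowerSeries K)),
        ∃ g ∈ (Ideal.span {(X : PowerSeries K)}).restrictScalars K,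
          h = f * (derivative K g) - g * (derivative K f)}
      = (Ideal.span {(X : PowerSeries K) ^ N}).restrictScalars K := by
  obtain ⟨n, rfl⟩ : ∃ n, N = n + 1 := ⟨N - 1, by omega⟩
  apply le_antisymm
  · rw [Submodule.span_le]
    rintro _ ⟨f, hf, g, hg, rfl⟩
    have hXf : X ^ (n + 1) ∣ f := by
      obtain ⟨a, b, rfl⟩ := Submodule.mem_span_pair.mp hf
      rw [smul_eq_C_mul, smul_eq_C_mul, pow_succ _ (n + 1)]
      exact dvd_add (dvd_mul_left _ _) (dvd_mul_of_dvd_right (dvd_mul_right _ _) _)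
    exact Ideal.mem_span_singleton.mpr
      (X_pow_dvd_mul_derivative_sub hXf (Ideal.mem_span_singleton.mp hg))
  · intro _ hu
    obtain ⟨u, rfl⟩ := Ideal.mem_span_singleton.mp hu
    obtain ⟨v, hv⟩ := exists_X_pow_succ_mul_eq n u
    rw [hv]
    refine add_mem (Submodule.subset_span ⟨X ^ (n + 1), Submodule.subset_span (by simp), X * v,
      Ideal.mem_span_singleton.mpr (dvd_mul_right _ _), rfl⟩) (Submodule.smul_mem _ _ ?_)
    exact Submodule.subset_span ⟨X ^ (n + 2), Submodule.subset_span (by simp), X ^ n,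
      Ideal.mem_span_singleton.mpr (dvd_pow_self X (by omega)), rfl⟩
end

section
/- Every nonzero ideal of the Lie algebra m·d/dx of polynomial vector fields on the affine line vanishing at 0 contains m^{N+1}·d/dx for some N; consequently, every finite-dimensional representation of m·d/dx is annihilated by m^{N+1}·d/dx for some N. -/
/-!
With `e k = x^{k+1} d/dx` one has `[e m, e n] = (n - m) e (m + n)`, so `ad (e 0)` acts diagonally,
with eigenvalue `k` on `e k`. An ideal is `ad (e 0)`-stable, hence contains the eigencomponents of
each of its elements; so a nonzero ideal contains some `e n`, and bracketing with `e (k - n)` then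
gives every `e k` with `k > 2n`, which span `m^{2n+2} d/dx`. In a finite-dimensional representation
`ρ`, the nonzero `ρ (e n)` are eigenvectors of `ad (ρ (e 0))` with the distinct eigenvalues `n`, so
some `ρ (e n)` vanishes and the kernel of `ρ` is a nonzero ideal.
-/

open Polynomial

variable (K : Type*) [Field K] [CharZero K]

private lemma span_X_stable (d : Derivation K (Polynomial K) (Polynomial K))
    (hd : d X ∈ Ideal.span {(X : Polynomial K)}) :
    ∀ f ∈ Ideal.span {(X : Polynomial K)}, d f ∈ Ideal.span {(X : Polynomial K)} := by
  intro f hf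
  rw [Ideal.mem_span_singleton] at hf
  obtain ⟨g, rfl⟩ := hf
  rw [Derivation.leibniz, smul_eq_mul, smul_eq_mul]
  exact add_mem (Ideal.mul_mem_right _ _ (Ideal.mem_span_singleton_self _))
    (Ideal.mul_mem_left _ _ hd)

/-- The Lie algebra `m·d/dx` of polynomial vector fields on the affine line
vanishing at the origin: derivations `d` of `K[x]` with `d(x) ∈ (x)`. -/
noncomputable def mVLie : LieSubalgebra K (Derivation K (Polynomial K) (Polynomial K)) where
  carrier := {d | d X ∈ Ideal.span {(X : Polynomial K)}}
  add_mem' := by intro d e hd he; simpa using add_mem hd he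
  smul_mem' := by
    intro c d hd
    simpa using
      Submodule.smul_mem ((Ideal.span {(X : Polynomial K)}).restrictScalars K) c hd
  zero_mem' := by
    simp only [Set.mem_setOf_eq, Derivation.coe_zero, Pi.zero_apply]
    exact Submodule.zero_mem _
  lie_mem' := by
    intro d e hd he
    rw [Set.mem_setOf_eq, Derivation.commutator_apply]
    exact sub_mem (span_X_stable K d hd _ he) (span_X_stable K e he _ hd)

theorem Submodule.mem_of_sum_mem_of_apply_eq_smul {F V ι : Type*} [Field F] [AddCommGroup V]
    [Module F V] [DecidableEq ι] {p : Submodule F V} {f : Module.End F V}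
    (hp : ∀ x ∈ p, f x ∈ p) {μ : ι → F} {s : Finset ι} (hμ : Set.InjOn μ s) {v : ι → V}
    (hv : ∀ i ∈ s, f (v i) = μ i • v i) (hs : ∑ i ∈ s, v i ∈ p) : ∀ i ∈ s, v i ∈ p := by
  induction s using Finset.induction_on generalizing v with
  | empty => simp
  | insert j s hj ih =>
    rw [Finset.sum_insert hj] at hs
    have hshift : ∑ i ∈ s, (μ i - μ j) • v i ∈ p := by
      have : f (v j + ∑ i ∈ s, v i) - μ j • (v j + ∑ i ∈ s, v i)
          = ∑ i ∈ s, (μ i - μ j) • v i := by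
        simp only [map_add, map_sum, hv j (Finset.mem_insert_self j s), smul_add, sub_smul,
          Finset.sum_sub_distrib, Finset.smul_sum]
        rw [Finset.sum_congr rfl fun i hi => hv i (Finset.mem_insert_of_mem hi)]
        abel
      exact this ▸ p.sub_mem (hp _ hs) (p.smul_mem _ hs)
    have hrest : ∀ i ∈ s, v i ∈ p := by
      intro i hi
      have hne : μ i - μ j ≠ 0 := sub_ne_zero.2 fun h => hj <|
        hμ (Finset.mem_insert_of_mem hi) (Finset.mem_insert_self j s) h ▸ hi
      refine (p.smul_mem_iff hne).1 (ih (hμ.mono (Finset.coe_subset.2 (Finset.subset_insert j s)))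
        (fun i hi => ?_) hshift i hi)
      rw [map_smul, hv i (Finset.mem_insert_of_mem hi), smul_comm]
    intro i hi
    rcases Finset.mem_insert.1 hi with rfl | hi
    · simpa using p.sub_mem hs (p.sum_mem hrest)
    · exact hrest i hi

section

attribute [local instance] LieRing.ofAssociativeRing

theorem LieModule.exists_mem_ker_of_lie_eq_smul {F L M ι : Type*} [Field F] [LieRing L]
    [LieAlgebra F L] [AddCommGroup M] [Module F M] [LieRingModule L M] [LieModule F L M]
    [FiniteDimensional F M] [Infinite ι] {x : L} {v : ι → L} {μ : ι → F}
    (hμ : Function.Injective μ) (hv : ∀ i, ⁅x, v i⁆ = μ i • v i) :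
    ∃ i, v i ∈ LieModule.ker F L M := by
  by_contra! h
  replace h : ∀ i, toEnd F L M (v i) ≠ 0 := fun i h0 => h i (LieHom.mem_ker.2 h0)
  have heig : ∀ i, (LieAlgebra.ad F (Module.End F M) (toEnd F L M x)).HasEigenvalue (μ i) :=
    fun i => Module.End.hasEigenvalue_of_hasEigenvector ⟨Module.End.mem_eigenspace_iff.2
      (by rw [LieAlgebra.ad_apply, ← LieHom.map_lie, hv, map_smul]), h i⟩
  exact Set.infinite_range_of_injective hμ
    ((Module.End.finite_hasEigenvalue _).subset (Set.range_subset_iff.2 heig))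

end

namespace mVLie

noncomputable def ofPoly : K[X] →ₗ[K] mVLie K where
  toFun g := ⟨mkDerivation K (X * g), Ideal.mem_span_singleton.2 <| by
    rw [mkDerivation_X]; exact dvd_mul_right X g⟩
  map_add' f g := Subtype.ext (by simp [mul_add])
  map_smul' c g := Subtype.ext (by simp)

noncomputable def e (k : ℕ) : mVLie K := ofPoly K (X ^ k)

lemma coe_e (k : ℕ) : (e K k : Derivation K K[X] K[X]) = mkDerivation K (X ^ (k + 1)) := by
  rw [pow_succ']; rfl

lemma e_apply_X (k : ℕ) : (e K k : Derivation K K[X] K[X]) X = X ^ (k + 1) := by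
  rw [coe_e, mkDerivation_X]

lemma e_ne_zero (k : ℕ) : e K k ≠ 0 := fun h => by
  simpa [e_apply_X] using congrArg (fun d : mVLie K => (d : Derivation K K[X] K[X]) X) h

lemma lie_e (m n : ℕ) : ⁅e K m, e K n⁆ = ((n : K) - m) • e K (m + n) := by
  refine Subtype.ext (derivation_ext ?_)
  rw [LieSubalgebra.coe_bracket, Derivation.commutator_apply, SetLike.val_smul,
    Derivation.smul_apply, e_apply_X, e_apply_X, e_apply_X, coe_e, coe_e, mkDerivation_apply,
    mkDerivation_apply, derivative_X_pow, derivative_X_pow, smul_eq_mul, smul_eq_mul,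
    smul_eq_C_mul]
  simp only [Nat.add_sub_cancel, Nat.cast_add, Nat.cast_one, map_add, map_sub, map_natCast, map_one]
  ring

variable {K}

@[simp]
lemma ofPoly_apply_X (g : K[X]) : (ofPoly K g : Derivation K K[X] K[X]) X = X * g :=
  mkDerivation_X K _

lemma eq_ofPoly_of_apply_X_eq {d : mVLie K} {g : K[X]}
    (h : (d : Derivation K K[X] K[X]) X = X * g) : d = ofPoly K g :=
  Subtype.ext (derivation_ext (by rw [h, ofPoly_apply_X]))

lemma exists_eq_ofPoly (d : mVLie K) : ∃ g, d = ofPoly K g := by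
  obtain ⟨g, hg⟩ := Ideal.mem_span_singleton.1 d.2
  exact ⟨g, eq_ofPoly_of_apply_X_eq hg⟩

lemma ofPoly_eq_sum_e (g : K[X]) : ofPoly K g = ∑ i ∈ g.support, g.coeff i • e K i := by
  conv_lhs => rw [g.as_sum_support]
  simp [← smul_X_eq_monomial, e]

variable {I : LieIdeal K (mVLie K)}

lemma exists_e_mem (hI : I ≠ ⊥) : ∃ n, e K n ∈ I := by
  obtain ⟨d, hdI, hd0⟩ : ∃ d ∈ I, d ≠ 0 := by simpa [LieSubmodule.eq_bot_iff] using hI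
  obtain ⟨g, rfl⟩ := exists_eq_ofPoly d
  obtain ⟨n, hn⟩ := nonempty_support_iff.2 (fun hg : g = 0 => hd0 (by simp [hg]))
  have hcomponent : g.coeff n • e K n ∈ (I : Submodule K (mVLie K)) := by
    refine Submodule.mem_of_sum_mem_of_apply_eq_smul (f := LieAlgebra.ad K _ (e K 0))
      (fun x hx => I.lie_mem hx) Nat.cast_injective.injOn (fun i _ => ?_)
      (ofPoly_eq_sum_e g ▸ hdI) n hn
    simp [lie_e, smul_comm (i : K)]
  exact ⟨n, (Submodule.smul_mem_iff _ (mem_support_iff.1 hn)).1 hcomponent⟩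

lemma e_mem_of_two_mul_lt {n k : ℕ} (hn : e K n ∈ I) (hk : 2 * n < k) : e K k ∈ I := by
  have hc : (n : K) - (k - n : ℕ) ≠ 0 := sub_ne_zero.2 (by exact_mod_cast (by omega : n ≠ k - n))
  have hbracket : ⁅e K (k - n), e K n⁆ = ((n : K) - (k - n : ℕ)) • e K k := by
    rw [lie_e, Nat.sub_add_cancel (by omega : n ≤ k)]
  exact (Submodule.smul_mem_iff (I : Submodule K (mVLie K)) hc).1 (hbracket ▸ I.lie_mem hn)

lemma mem_of_apply_X_mem_pow {N : ℕ} (hI : ∀ k, N ≤ k → e K k ∈ I) {d : mVLie K}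
    (hd : (d : Derivation K K[X] K[X]) X ∈ Ideal.span {(X : K[X])} ^ (N + 1)) : d ∈ I := by
  rw [Ideal.span_singleton_pow, Ideal.mem_span_singleton] at hd
  obtain ⟨g, hg⟩ := hd
  rw [eq_ofPoly_of_apply_X_eq (d := d) (g := X ^ N * g) (by rw [hg]; ring), ofPoly_eq_sum_e]
  refine I.sum_mem fun i hi => I.smul_mem _ (hI i ?_)
  by_contra! hi'
  exact mem_support_iff.1 hi (X_pow_dvd_iff.1 (dvd_mul_right _ _) i hi')

lemma exists_pow_le_of_ne_bot (hI : I ≠ ⊥) :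
    ∃ N : ℕ, ∀ d : mVLie K,
      (d : Derivation K K[X] K[X]) X ∈ Ideal.span {(X : K[X])} ^ (N + 1) → d ∈ I := by
  obtain ⟨n, hn⟩ := exists_e_mem hI
  exact ⟨2 * n + 1, fun d => mem_of_apply_X_mem_pow fun k hk => e_mem_of_two_mul_lt hn hk⟩

end mVLie

/-- Every nonzero ideal of `m·d/dx` contains `m^{N+1}·d/dx` for some `N`;
consequently every finite-dimensional representation `W` of `m·d/dx` is
annihilated by `m^{N+1}·d/dx` for some `N`. -/
theorem mV_ideals_and_findim_reps
    (W : Type*) [AddCommGroup W] [Module K W]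
    [LieRingModule (mVLie K) W] [LieModule K (mVLie K) W] [FiniteDimensional K W] :
    (∀ I : LieIdeal K (mVLie K), I ≠ ⊥ →
      ∃ N : ℕ, ∀ d : mVLie K,
        (d : Derivation K (Polynomial K) (Polynomial K)) X
            ∈ (Ideal.span {(X : Polynomial K)}) ^ (N + 1) →
        d ∈ I) ∧
    (∃ N : ℕ, ∀ d : mVLie K,
      (d : Derivation K (Polynomial K) (Polynomial K)) X
          ∈ (Ideal.span {(X : Polynomial K)}) ^ (N + 1) →
      ∀ w : W, ⁅d, w⁆ = 0) := by
  refine ⟨fun I => mVLie.exists_pow_le_of_ne_bot, ?_⟩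
  obtain ⟨n, hn⟩ := LieModule.exists_mem_ker_of_lie_eq_smul (M := W) (x := mVLie.e K 0)
    Nat.cast_injective fun n => by simpa using mVLie.lie_e K 0 n
  have hker : LieModule.ker K (mVLie K) W ≠ ⊥ := fun h =>
    mVLie.e_ne_zero K n ((LieSubmodule.mem_bot _).1 (h ▸ hn))
  obtain ⟨N, hN⟩ := mVLie.exists_pow_le_of_ne_bot hker
  exact ⟨N, fun d hd => (LieModule.mem_ker K (mVLie K) W d).1 (hN d hd)⟩
end

section
/- Let P be a point of the affine line, m_P = (x − p) ⊂ K[x], V = K[x]·d/dx. Then for every N ≥ 1 the quotient Lie algebra m_P V / m_P^{N+1} V is isomorphic to L̂_+ / m^N L̂_+, the quotient of vanishing-at-zero derivations of K[[X]] by those with coefficient in X^{N+1}K[[X]], via the map f·d/dx ↦ Σ_{0 < s ≤ N} (1/s!) f^{(s)}(p) X^s d/dX. -/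
open Polynomial Finset

/-- Truncation map realizing `m_P V / m_P^{N+1} V ≅ L̂_+ / m^N L̂_+`:
a vector field `f·d/dx` is sent to the Taylor coefficients
`(1/s!)·f^{(s)}(p)` for `s = 1, ..., N` (here the index `s : Fin N`
represents the degree `s+1`). -/
noncomputable def truncMap (K : Type*) [Field K] (p : K) (N : ℕ)
    (d : Derivation K (Polynomial K) (Polynomial K)) : Fin N → K :=
  fun s => (((s.1 + 1).factorial : K))⁻¹ * ((derivative^[s.1 + 1] (d X)).eval p)

/-- The Lie bracket of `L̂_+ / m^N L̂_+` in coordinates: the index `a : Fin N`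
represents the derivation `X^{a+1} d/dX`, and
`[X^{a'} d/dX, X^{b'} d/dX] = (b'−a') X^{a'+b'−1} d/dX`. -/
noncomputable def truncBracket (K : Type*) [Field K] (N : ℕ)
    (u v : Fin N → K) : Fin N → K :=
  fun k => ∑ a : Fin N, ∑ b : Fin N,
    if a.1 + b.1 = k.1 then (((b.1 : K) + 1) - ((a.1 : K) + 1)) * u a * v b else 0

section Aux
variable {K : Type*} [Field K]

lemma tm_eq [CharZero K] (p : K) (N : ℕ) (d : Derivation K (Polynomial K) (Polynomial K))
    (s : Fin N) : truncMap K p N d s = (taylor p (d X)).coeff (s.1 + 1) := by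
  rw [truncMap, taylor_coeff]
  have h := congrFun (Polynomial.factorial_smul_hasseDeriv (R := K) (s.1 + 1)) (d X)
  simp only [LinearMap.smul_apply] at h
  rw [← h, nsmul_eq_mul, eval_mul, eval_natCast,
    inv_mul_cancel_left₀ (by exact_mod_cast (s.1+1).factorial_ne_zero)]

lemma taylor_sub_pow (p : K) (m : ℕ) : taylor p ((X - C p) ^ m) = X ^ m := by
  have h : taylor p (X - C p) = X := by
    rw [map_sub, taylor_X, taylor_C]; ring
  calc taylor p ((X - C p) ^ m) = taylorAlgHom p ((X - C p) ^ m) := rfl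
    _ = (taylorAlgHom p (X - C p)) ^ m := map_pow _ _ _
    _ = X ^ m := by rw [taylorAlgHom_apply, h]

lemma sub_pow_dvd_iff (p : K) (m : ℕ) (f : K[X]) :
    (X - C p) ^ m ∣ f ↔ X ^ m ∣ taylor p f := by
  constructor
  · intro h
    have := map_dvd (taylorAlgHom p) h
    rw [taylorAlgHom_apply, taylorAlgHom_apply] at this
    rwa [taylor_sub_pow p m] at this
  · intro h
    have := map_dvd (taylorAlgHom (-p)) h
    simp only [taylorAlgHom_apply] at this
    rw [taylor_taylor, neg_add_cancel, taylor_zero] at this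
    have h2 : taylor (-p) (X ^ m) = (X - C p) ^ m := by
      calc taylor (-p) (X ^ m) = taylorAlgHom (-p) (X ^ m) := rfl
        _ = (taylorAlgHom (-p) X) ^ m := map_pow _ _ _
        _ = (X - C p) ^ m := by rw [taylorAlgHom_apply, taylor_X, map_neg]; ring
    rwa [h2] at this

lemma deriv_apply (d : Derivation K (Polynomial K) (Polynomial K)) (f : K[X]) :
    d f = derivative f * d X := by
  have : d = Polynomial.mkDerivation K (d X) :=
    Polynomial.derivation_ext (by rw [Polynomial.mkDerivation_X])
  rw [this, Polynomial.mkDerivation_apply, smul_eq_mul, Polynomial.mkDerivation_X]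

lemma taylor_deriv (p : K) (q : K[X]) :
    taylor p (derivative q) = derivative (taylor p q) := by
  rw [taylor_apply, taylor_apply, derivative_comp]
  simp

lemma coeff_comb (F G : K[X]) (hF : F.coeff 0 = 0) (hG : G.coeff 0 = 0) (k : ℕ) :
    (derivative G * F - derivative F * G).coeff (k + 1)
      = ∑ a ∈ range (k + 1),
          ((((k - a : ℕ) : K) + 1) - ((a : K) + 1)) * F.coeff (a + 1) * G.coeff (k - a + 1) := by
  have hA : (derivative G * F).coeff (k + 1)
      = ∑ a ∈ range (k + 1), (((k - a : ℕ) : K) + 1) * F.coeff (a + 1) * G.coeff (k - a + 1) := by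
    rw [coeff_mul, Finset.Nat.sum_antidiagonal_eq_sum_range_succ
      (fun i j => (derivative G).coeff i * F.coeff j)]
    rw [Finset.sum_range_succ]
    simp only [Nat.sub_self, hF, mul_zero, add_zero]
    rw [← Finset.sum_range_reflect]
    refine Finset.sum_congr rfl fun a ha => ?_
    rw [Finset.mem_range] at ha
    have h1 : k + 1 - 1 - a = k - a := by omega
    have h2 : k + 1 - (k - a) = a + 1 := by omega
    rw [h1, h2, coeff_derivative]
    ring
  have hB : (derivative F * G).coeff (k + 1)
      = ∑ a ∈ range (k + 1), ((a : K) + 1) * F.coeff (a + 1) * G.coeff (k - a + 1) := by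
    rw [coeff_mul, Finset.Nat.sum_antidiagonal_eq_sum_range_succ
      (fun i j => (derivative F).coeff i * G.coeff j)]
    rw [Finset.sum_range_succ]
    simp only [Nat.sub_self, hG, mul_zero, add_zero]
    refine Finset.sum_congr rfl fun a ha => ?_
    rw [Finset.mem_range] at ha
    have h2 : k + 1 - a = k - a + 1 := by omega
    rw [h2, coeff_derivative]
    ring
  rw [coeff_sub, hA, hB, ← Finset.sum_sub_distrib]
  refine Finset.sum_congr rfl fun a _ => ?_
  ring

lemma trunc_sum (N k : ℕ) (hk : k < N) (φ : ℕ → ℕ → K) :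
    (∑ a : Fin N, ∑ b : Fin N, if a.1 + b.1 = k then φ a.1 b.1 else 0)
      = ∑ a ∈ range (k + 1), φ a (k - a) := by
  rw [Fin.sum_univ_eq_sum_range (fun a => ∑ b : Fin N, if a + b.1 = k then φ a b.1 else 0)]
  have h1 : ∀ a ∈ range N, (∑ b : Fin N, if a + b.1 = k then φ a b.1 else 0)
      = if a ≤ k then φ a (k - a) else 0 := by
    intro a _
    rw [Fin.sum_univ_eq_sum_range (fun b => if a + b = k then φ a b else 0)]
    by_cases h : a ≤ k
    · rw [if_pos h, Finset.sum_eq_single (k - a)]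
      · rw [if_pos (by omega)]
      · intro b _ hb; rw [if_neg (by omega)]
      · intro hmem; exact absurd (Finset.mem_range.2 (by omega)) hmem
    · rw [if_neg h]
      exact Finset.sum_eq_zero fun b _ => if_neg (by omega)
  rw [Finset.sum_congr rfl h1]
  rw [← Finset.sum_subset (Finset.range_subset_range.2 hk)
    (fun x _ hx => if_neg (by rw [Finset.mem_range] at hx; omega))]
  exact Finset.sum_congr rfl fun a ha => if_pos (by rw [Finset.mem_range] at ha; omega)

end Aux

/-- For `p ∈ K` and `N ≥ 1`, the map `f·d/dx ↦ Σ_{0<s≤N} (1/s!) f^{(s)}(p) X^s d/dX`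
induces a Lie algebra isomorphism `m_P V / m_P^{N+1} V ≅ L̂_+ / m^N L̂_+`: it is
linear, maps `m_P V` onto the truncated algebra, has kernel `m_P^{N+1} V` on
`m_P V`, and intertwines the Lie brackets. -/
theorem truncation_iso (K : Type*) [Field K] [CharZero K] (p : K) (N : ℕ) (hN : 1 ≤ N) :
    -- linearity:
    (∀ d e : Derivation K (Polynomial K) (Polynomial K),
      truncMap K p N (d + e) = truncMap K p N d + truncMap K p N e) ∧
    (∀ (c : K) (d : Derivation K (Polynomial K) (Polynomial K)),
      truncMap K p N (c • d) = c • truncMap K p N d) ∧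
    -- surjectivity from `m_P V` onto `L̂_+ / m^N L̂_+`:
    (∀ u : Fin N → K, ∃ d : Derivation K (Polynomial K) (Polynomial K),
      d X ∈ Ideal.span {X - C p} ∧ truncMap K p N d = u) ∧
    -- the kernel on `m_P V` is exactly `m_P^{N+1} V`:
    (∀ d : Derivation K (Polynomial K) (Polynomial K), d X ∈ Ideal.span {X - C p} →
      (truncMap K p N d = 0 ↔ d X ∈ Ideal.span {(X - C p) ^ (N + 1)})) ∧
    -- compatibility with the Lie brackets:
    (∀ d e : Derivation K (Polynomial K) (Polynomial K),
      d X ∈ Ideal.span {X - C p} → e X ∈ Ideal.span {X - C p} →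
      truncMap K p N ⁅d, e⁆ = truncBracket K N (truncMap K p N d) (truncMap K p N e)) := by
  
  refine ⟨?_, ?_, ?_, ?_, ?_⟩
  · intro d e
    funext s
    simp [tm_eq]
  · intro c d
    funext s
    simp [tm_eq, smul_eq_mul]
  · intro u
    refine ⟨Polynomial.mkDerivation K (∑ a : Fin N, C (u a) * (X - C p) ^ (a.1 + 1)), ?_, ?_⟩
    · rw [Polynomial.mkDerivation_X, Ideal.mem_span_singleton]
      exact Finset.dvd_sum fun a _ =>
        Dvd.dvd.mul_left (dvd_pow_self _ (Nat.succ_ne_zero _)) _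
    · funext s
      rw [tm_eq, Polynomial.mkDerivation_X]
      have h1 : taylor p (∑ a : Fin N, C (u a) * (X - C p) ^ (a.1 + 1))
          = ∑ a : Fin N, C (u a) * X ^ (a.1 + 1) := by
        rw [map_sum]
        exact Finset.sum_congr rfl fun a _ => by rw [taylor_mul, taylor_C, taylor_sub_pow]
      rw [h1, finset_sum_coeff, Finset.sum_eq_single s]
      · rw [coeff_C_mul, coeff_X_pow, if_pos rfl, mul_one]
      · intro a _ ha
        rw [coeff_C_mul, coeff_X_pow, if_neg (fun h => ha (Fin.ext (by omega))), mul_zero]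
      · intro h
        exact absurd (Finset.mem_univ s) h
  · intro d hd
    rw [Ideal.mem_span_singleton] at hd
    have h0 : (taylor p (d X)).coeff 0 = 0 := by
      have := (sub_pow_dvd_iff p 1 (d X)).1 (by rwa [pow_one])
      rw [X_pow_dvd_iff] at this
      exact this 0 Nat.one_pos
    rw [Ideal.mem_span_singleton, sub_pow_dvd_iff, X_pow_dvd_iff]
    constructor
    · intro h n hn
      match n with
      | 0 => exact h0
      | Nat.succ m =>
        have hm : m < N := by omega
        have := congrFun h ⟨m, hm⟩
        rw [tm_eq] at this
        exact this
    · intro h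
      funext s
      simp only [Pi.zero_apply, tm_eq]
      exact h (s.1 + 1) (by omega)
  · intro d e hd he
    rw [Ideal.mem_span_singleton] at hd he
    have hf0 : (taylor p (d X)).coeff 0 = 0 := by
      have := (sub_pow_dvd_iff p 1 (d X)).1 (by rwa [pow_one])
      rw [X_pow_dvd_iff] at this
      exact this 0 Nat.one_pos
    have hg0 : (taylor p (e X)).coeff 0 = 0 := by
      have := (sub_pow_dvd_iff p 1 (e X)).1 (by rwa [pow_one])
      rw [X_pow_dvd_iff] at this
      exact this 0 Nat.one_pos
    funext k
    have hb : (⁅d, e⁆ : Derivation K (Polynomial K) (Polynomial K)) X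
        = derivative (e X) * d X - derivative (d X) * e X := by
      rw [Derivation.commutator_apply, deriv_apply d (e X), deriv_apply e (d X)]
    rw [tm_eq, hb, map_sub, taylor_mul, taylor_mul, taylor_deriv, taylor_deriv,
      coeff_comb _ _ hf0 hg0 k.1, truncBracket]
    simp only [tm_eq]
    rw [trunc_sum N k.1 k.2 (fun a b => (((b : K) + 1) - ((a : K) + 1)) *
      (taylor p (d X)).coeff (a + 1) * (taylor p (e X)).coeff (b + 1))]
end

section
/- The 2-dimensional representation σ_m of L̂_+ = XK[[X]]d/dX defined by σ_m(X d/dX) = diag(m+2, m), σ_m(X² d/dX) = 0, σ_m(X³ d/dX) = E_{12}, and σ_m(X^k d/dX) = 0 for k ≥ 4, is a Lie algebra homomorphism from L̂_+ to gl_2(K) for every m ∈ K. -/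
/-!
Only the coefficients of `X` and `X³` matter. For `f, g ∈ X K⟦X⟧` the bracket `f g' − g f'` has
coefficient `0` at `X` and `2 (f₁ g₃ − f₃ g₁)` at `X³`, while bilinearity of the commutator gives
`[f₁ D + f₃ E, g₁ D + g₃ E] = (f₁ g₃ − f₃ g₁) [D, E]` with `[D, E] = 2 E` for
`D = diag(m + 2, m)` and `E = E₁₂`.
-/

open PowerSeries

/-- The 2-dimensional representation `σ_m` of `L̂_+ = XK[[X]]d/dX`:
`σ_m(X d/dX) = diag(m+2, m)`, `σ_m(X² d/dX) = 0`, `σ_m(X³ d/dX) = E₁₂`,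
`σ_m(X^k d/dX) = 0` for `k ≥ 4`. -/
noncomputable def sigmaRep (K : Type*) [Field K] (m : K) (f : PowerSeries K) :
    Matrix (Fin 2) (Fin 2) K :=
  (coeff 1 f) • !![m + 2, 0; 0, m] + (coeff 3 f) • !![0, 1; 0, 0]

namespace PowerSeries

section CommSemiring

variable {R : Type*} [CommSemiring R] {f : R⟦X⟧}

theorem coeff_one_mul_derivative (g : R⟦X⟧) (hf : constantCoeff f = 0) :
    coeff 1 (f * derivative R g) = coeff 1 f * coeff 1 g := by
  rw [coeff_mul, Finset.Nat.sum_antidiagonal_eq_sum_range_succ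
    (fun i j => coeff i f * coeff j (derivative R g))]
  simp [Finset.sum_range_succ, coeff_derivative, hf]

theorem coeff_three_mul_derivative (g : R⟦X⟧) (hf : constantCoeff f = 0) :
    coeff 3 (f * derivative R g) =
      coeff 1 f * (3 * coeff 3 g) + coeff 2 f * (2 * coeff 2 g) + coeff 3 f * coeff 1 g := by
  rw [coeff_mul, Finset.Nat.sum_antidiagonal_eq_sum_range_succ
    (fun i j => coeff i f * coeff j (derivative R g))]
  simp [Finset.sum_range_succ, coeff_derivative, hf]
  ring

end CommSemiring

section CommRing

variable {R : Type*} [CommRing R] {f g : R⟦X⟧}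

theorem coeff_one_mul_derivative_sub_mul_derivative (hf : constantCoeff f = 0)
    (hg : constantCoeff g = 0) :
    coeff 1 (f * derivative R g - g * derivative R f) = 0 := by
  rw [map_sub, coeff_one_mul_derivative g hf, coeff_one_mul_derivative f hg, mul_comm, sub_self]

theorem coeff_three_mul_derivative_sub_mul_derivative (hf : constantCoeff f = 0)
    (hg : constantCoeff g = 0) :
    coeff 3 (f * derivative R g - g * derivative R f) =
      2 * (coeff 1 f * coeff 3 g - coeff 3 f * coeff 1 g) := by
  rw [map_sub, coeff_three_mul_derivative g hf, coeff_three_mul_derivative f hg]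
  ring

end CommRing

end PowerSeries

theorem smul_add_smul_commutator {R A : Type*} [CommRing R] [Ring A] [Algebra R A]
    (a b c d : R) (x y : A) :
    (a • x + b • y) * (c • x + d • y) - (c • x + d • y) * (a • x + b • y) =
      (a * d - b * c) • (x * y - y * x) := by
  simp only [add_mul, mul_add, smul_mul_smul_comm]
  module

theorem Matrix.diag_fin_two_commutator_upper {K : Type*} [CommRing K] (m : K) :
    !![m + 2, 0; 0, m] * !![0, 1; 0, 0] - !![0, 1; 0, 0] * !![m + 2, 0; 0, m] =
      (2 : K) • !![(0 : K), 1; 0, 0] := by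
  ext i j
  fin_cases i <;> fin_cases j <;> simp

section sigmaRep

variable (K : Type*) [Field K] (m : K)

theorem sigmaRep_add (f g : K⟦X⟧) :
    sigmaRep K m (f + g) = sigmaRep K m f + sigmaRep K m g := by
  simp only [sigmaRep, map_add, add_smul]
  abel

theorem sigmaRep_smul (c : K) (f : K⟦X⟧) : sigmaRep K m (c • f) = c • sigmaRep K m f := by
  simp only [sigmaRep, map_smul, smul_add, smul_smul, smul_eq_mul]

theorem sigmaRep_mul_derivative_sub_mul_derivative {f g : K⟦X⟧} (hf : constantCoeff f = 0)
    (hg : constantCoeff g = 0) :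
    sigmaRep K m (f * derivative K g - g * derivative K f)
      = sigmaRep K m f * sigmaRep K m g - sigmaRep K m g * sigmaRep K m f := by
  rw [sigmaRep, coeff_one_mul_derivative_sub_mul_derivative hf hg,
    coeff_three_mul_derivative_sub_mul_derivative hf hg, sigmaRep, sigmaRep,
    smul_add_smul_commutator, Matrix.diag_fin_two_commutator_upper, zero_smul, zero_add,
    smul_smul, mul_comm]

end sigmaRep

theorem sigmaRep_is_lie_hom_general (K : Type*) [Field K] (m : K) :
    (∀ f g : PowerSeries K, sigmaRep K m (f + g) = sigmaRep K m f + sigmaRep K m g) ∧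
    (∀ (c : K) (f : PowerSeries K), sigmaRep K m (c • f) = c • sigmaRep K m f) ∧
    (∀ f g : PowerSeries K, constantCoeff f = 0 → constantCoeff g = 0 →
      sigmaRep K m (f * derivative K g - g * derivative K f)
        = sigmaRep K m f * sigmaRep K m g - sigmaRep K m g * sigmaRep K m f) :=
  ⟨sigmaRep_add K m, sigmaRep_smul K m,
    fun _ _ => sigmaRep_mul_derivative_sub_mul_derivative K m⟩

/-- `σ_m` is a Lie algebra homomorphism from `L̂_+` to `gl₂(K)` for every `m`:
it is linear and sends the bracket `[f d/dX, g d/dX] = (fg' − gf') d/dX` to the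
matrix commutator. -/
theorem sigmaRep_is_lie_hom (K : Type*) [Field K] [CharZero K] (m : K) :
    (∀ f g : PowerSeries K, sigmaRep K m (f + g) = sigmaRep K m f + sigmaRep K m g) ∧
    (∀ (c : K) (f : PowerSeries K), sigmaRep K m (c • f) = c • sigmaRep K m f) ∧
    (∀ f g : PowerSeries K, constantCoeff f = 0 → constantCoeff g = 0 →
      sigmaRep K m (f * derivative K g - g * derivative K f)
        = sigmaRep K m f * sigmaRep K m g - sigmaRep K m g * sigmaRep K m f) :=
  sigmaRep_is_lie_hom_general K m
end

section
/- In the formal power series ring K[[X]] with char K = 0, the exponential of the derivation αX² d/dX (α ∈ K) is the automorphism g(X) ↦ g(X/(1 − αX)); i.e. for every g ∈ K[[X]], Σ_{k≥0} (1/k!) (αX² d/dX)^k g = g(X(1−αX)^{−1}). -/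
/-!
Compare the coefficients of `X^n`. Since `αX² d/dX` sends `X^m` to `α m X^(m+1)`, its `k`-th
iterate carries `g_(n-k) X^(n-k)` to `α^k (n-1)(n-2)⋯(n-k) g_(n-k) X^n`, so the `k`-th term of the
exponential contributes `α^k C(n-1, k) g_(n-k)`. On the other side, `(1 - αX)⁻¹` is the geometric
series rescaled by `X ↦ αX`, so the coefficient of `X^n` in `(X/(1-αX))^j` is
`α^(n-j) C(n-1, n-j)`, and the reindexing `j = n - k` matches the two sums.
-/

open PowerSeries

/-- The derivation `αX² d/dX` on `K[[X]]`. -/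
noncomputable def expDer (K : Type*) [Field K] (α : K) (g : PowerSeries K) :
    PowerSeries K :=
  C (R := K) α * X ^ 2 * derivative K g

namespace PowerSeries

variable {K : Type*} [Field K] (α : K)

theorem inv_one_sub_C_mul_X : (1 - C α * X)⁻¹ = rescale α (mk 1) := by
  rw [eq_comm, PowerSeries.eq_inv_iff_mul_eq_one (by simp)]
  have hden : rescale α (1 - X) = 1 - C α * X := by
    rw [map_sub, map_one, rescale_X]
  rw [← hden, ← map_mul, mk_one_mul_one_sub_eq_one, map_one]

/-- For `j = 0` the right-hand side is `α^m C(m-1, m)`, which is `δ_(m,0)` thanks to truncated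
subtraction. -/
theorem coeff_inv_one_sub_C_mul_X_pow (m j : ℕ) :
    coeff m ((1 - C α * X)⁻¹ ^ j) = α ^ m * (m + j - 1).choose m := by
  rw [inv_one_sub_C_mul_X, ← map_pow, coeff_rescale]
  rcases j with _ | d
  · rcases m with _ | m <;> simp
  · rw [mk_one_pow_eq_mk_choose_add, coeff_mk, show m + (d + 1) - 1 = d + m by omega,
      Nat.choose_symm_add]

theorem coeff_X_mul_inv_one_sub_C_mul_X_pow {n j : ℕ} (h : j ≤ n) :
    coeff n ((X * (1 - C α * X)⁻¹) ^ j) = α ^ (n - j) * (n - 1).choose (n - j) := by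
  rw [mul_pow, coeff_X_pow_mul', if_pos h, coeff_inv_one_sub_C_mul_X_pow,
    Nat.sub_add_cancel h]

end PowerSeries

section expDer

variable {K : Type*} [Field K] (α : K)

theorem coeff_expDer (g : PowerSeries K) (n : ℕ) :
    coeff n (expDer K α g) = α * (n - 1 : ℕ) * coeff (n - 1) g := by
  rw [expDer, mul_assoc, coeff_C_mul, coeff_X_pow_mul']
  rcases n with _ | _ | m
  · simp
  · simp
  · simp only [if_pos (by omega : 2 ≤ m + 2), Nat.add_sub_cancel, coeff_derivative]
    push_cast
    ring

theorem coeff_iterate_expDer (g : PowerSeries K) (k n : ℕ) :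
    coeff n ((expDer K α)^[k] g) =
      α ^ k * (n - 1).descFactorial k * coeff (n - k) g := by
  induction k generalizing g with
  | zero => simp
  | succ k ih =>
    rw [Function.iterate_succ_apply, ih, coeff_expDer, Nat.descFactorial_succ,
      Nat.sub_sub, show n - 1 - k = n - (k + 1) by omega]
    push_cast
    ring

theorem coeff_iterate_expDer_of_lt (g : PowerSeries K) {n k : ℕ} (h : n < k) :
    coeff n ((expDer K α)^[k] g) = 0 := by
  rw [coeff_iterate_expDer, Nat.descFactorial_eq_zero_iff_lt.mpr (by omega), Nat.cast_zero,
    mul_zero, zero_mul]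

theorem inv_factorial_mul_coeff_iterate_expDer [CharZero K] (g : PowerSeries K) (k n : ℕ) :
    (k.factorial : K)⁻¹ * coeff n ((expDer K α)^[k] g) =
      α ^ k * (n - 1).choose k * coeff (n - k) g := by
  have hk : (k.factorial : K) ≠ 0 := Nat.cast_ne_zero.mpr k.factorial_ne_zero
  rw [coeff_iterate_expDer, Nat.descFactorial_eq_factorial_mul_choose]
  push_cast
  field_simp

end expDer

/-- In `K[[X]]` (char 0), the exponential of the derivation `αX² d/dX` is the
substitution automorphism `g(X) ↦ g(X/(1−αX))`. The operator raises the `X`-adic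
valuation, so the exponential series converges coefficientwise; comparing the
`n`-th coefficients (all terms with `k > n` vanish), for every `g`:
`coeff_n (Σ_k (1/k!) (αX² d/dX)^k g) = coeff_n (g(X/(1−αX)))`, where the
substitution is computed coefficientwise as `Σ_k (coeff_k g)·(X/(1−αX))^k`. -/
theorem exp_of_X_sq_derivation (K : Type*) [Field K] [CharZero K] (α : K) :
    (∀ (g : PowerSeries K) (n k : ℕ), n < k →
      coeff (R := K) n ((expDer K α)^[k] g) = 0) ∧
    (∀ (g : PowerSeries K) (n : ℕ),
      (∑ k ∈ Finset.range (n + 1),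
        ((k.factorial : K))⁻¹ * coeff (R := K) n ((expDer K α)^[k] g))
      = ∑ k ∈ Finset.range (n + 1),
          coeff (R := K) k g * coeff (R := K) n ((X * (1 - C (R := K) α * X)⁻¹) ^ k)) := by
  refine ⟨fun g n k h ↦ coeff_iterate_expDer_of_lt α g h, fun g n ↦ ?_⟩
  rw [← Finset.sum_range_reflect]
  refine Finset.sum_congr rfl fun k hk ↦ ?_
  have hkn : k ≤ n := Nat.lt_succ_iff.mp (Finset.mem_range.mp hk)
  rw [inv_factorial_mul_coeff_iterate_expDer, add_tsub_cancel_right,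
    coeff_X_mul_inv_one_sub_C_mul_X_pow α hkn, Nat.sub_sub_self hkn]
  ring
end
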